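/- arXiv:1212.0397 — 3 statements merged into one kernel-verified Lean document; each statement's English description precedes it below -/
import Mathlib

section
/- Let y be the vector indexed by H with entries y_h = ρ^{−(h_1+⋯+h_k)}. Then A_*(ρ^{−k}) y = y; that is, α = ρ^{−k} and y solve the right-invariance equation A_*(α) y = y. -/
open Filter Topology

noncomputable section

/-- Traffic intensity ρ = λ / Σ μᵢ. -/
def rho (k : ℕ) (lam : ℝ) (μ : Fin k → ℝ) : ℝ := lam / ∑ i, μ i

/-- `S(h) = {i ∈ J : h_i = 0}`, the set of coordinates where `h` vanishes. -/
def sZero (k : ℕ) (h : Fin k → ℕ) : Finset (Fin k) :=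
  Finset.univ.filter (fun i => h i = 0)

/-- The QBD block `A_{+1}`: `[A_{+1}]_{h, h−𝟙+e_i} = λ` when `|S(h)| = 1` and `i ∈ S(h)`. -/
def Aplus (k : ℕ) (lam : ℝ) (h h' : Fin k → ℕ) : ℝ :=
  if (sZero k h).card = 1 ∧ h' = fun j => h j - 1 then lam else 0

/-- The QBD block `A_0`: `[A_0]_{h, h+e_i} = λ/|S(h)|` when `|S(h)| ≥ 2`, `i ∈ S(h)`, and
`[A_0]_{h, h−e_j} = μ_j` for `j ∉ S(h)`. -/
def Azero (k : ℕ) (lam : ℝ) (μ : Fin k → ℝ) (h h' : Fin k → ℕ) : ℝ :=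
  (if 2 ≤ (sZero k h).card then
      ∑ i ∈ sZero k h,
        (if h' = Function.update h i 1 then lam / (sZero k h).card else 0)
    else 0)
  + ∑ j ∈ (sZero k h)ᶜ, (if h' = Function.update h j (h j - 1) then μ j else 0)

/-- The QBD block `A_{−1}`: `[A_{−1}]_{h, h+𝟙−e_i} = μ_i` for `i ∈ S(h)`. -/
def Aminus (k : ℕ) (μ : Fin k → ℝ) (h h' : Fin k → ℕ) : ℝ :=
  ∑ i ∈ sZero k h, (if h' = (fun j => if j = i then 0 else h j + 1) then μ i else 0)

/-- `A_*(z) = z⁻¹ A_{−1} + A_0 + z A_{+1}`. -/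
def Astar (k : ℕ) (lam : ℝ) (μ : Fin k → ℝ) (z : ℝ) (h h' : Fin k → ℕ) : ℝ :=
  z⁻¹ * Aminus k μ h h' + Azero k lam μ h h' + z * Aplus k lam h h'

end

/-! Every row of `A_*(z)` has finitely many nonzero entries, so pairing it with a vector is a
finite sum. For `y_h = x^{-|h|}` and `z = x^{-k}` the transitions change `|h|` by `k - 1`
(`A_{-1}`, weight `z⁻¹ μ_i`), by `-1` (`A_0`, weight `μ_j`) or by `+1` and `-(k - 1)` (the
`λ`-transitions of `A_0` and `A_{+1}`, exactly one of which is present). Each `μ`-transition thus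
contributes `μ_i x y_h` and the `λ`-transitions together `λ x⁻¹ y_h`, so
`A_*(x^{-k}) y = (x Σ μ_i + λ / x) y` for every `x ≠ 0`; at `x = ρ` the factor is
`λ + Σ μ_i = 1`. -/
open Finset Function

theorem sum_update_add_self {ι M : Type*} [Fintype ι] [DecidableEq ι] [AddCommMonoid M]
    (f : ι → M) (i : ι) (b : M) : ∑ j, update f i b j + f i = ∑ j, f j + b := by
  rw [sum_update_of_mem (mem_univ i), ← sum_erase_add _ _ (mem_univ i), sdiff_singleton_eq_erase]
  abel

theorem inv_pow_eq_of_add_eq {K : Type*} [Field K] {x : K} (hx : x ≠ 0) {m n a b : ℕ}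
    (h : m + a = n + b) : (x ^ m)⁻¹ = x ^ a / x ^ b * (x ^ n)⁻¹ := by
  field_simp
  rw [← pow_add, ← pow_add, add_comm, h]

theorem hasSum_sum_ite_eq_mul {α ι R : Type*} [DecidableEq α] [NonUnitalNonAssocSemiring R]
    [TopologicalSpace R] [ContinuousAdd R] (s : Finset ι) (c : ι → α) (v : ι → R) (g : α → R) :
    HasSum (fun x => (∑ i ∈ s, if x = c i then v i else 0) * g x) (∑ i ∈ s, v i * g (c i)) := by
  simp_rw [sum_mul]
  refine hasSum_sum fun i _ => ?_
  convert hasSum_ite_eq (c i) (v i * g (c i)) using 2 with x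
  split_ifs with hx <;> simp [hx]

section CoordinateSums

variable {ι : Type*} [Fintype ι] [DecidableEq ι] {h : ι → ℕ} {i : ι}

theorem sum_update_one_of_eq_zero (hi : h i = 0) : ∑ j, update h i 1 j = ∑ j, h j + 1 := by
  simpa [hi] using sum_update_add_self h i 1

theorem sum_update_pred_add_one (hi : h i ≠ 0) : ∑ j, update h i (h i - 1) j + 1 = ∑ j, h j := by
  have := sum_update_add_self h i (h i - 1)
  omega

theorem sum_succ_except_add_one (hi : h i = 0) :
    ∑ j, (if j = i then 0 else h j + 1) + 1 = ∑ j, h j + Fintype.card ι := by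
  have hupd : (fun j => if j = i then 0 else h j + 1) = update (fun j => h j + 1) i 0 := by
    ext j; by_cases hj : j = i <;> simp [hj]
  simpa [hupd, hi, sum_add_distrib] using sum_update_add_self (fun j => h j + 1) i 0

theorem sum_pred_add_card (hi : h i = 0) (hne : ∀ j ≠ i, h j ≠ 0) :
    ∑ j, (h j - 1) + Fintype.card ι = ∑ j, h j + 1 := by
  have hupd : (fun j => h j - 1 + 1) = update h i 1 := by
    ext j; by_cases hj : j = i
    · simp [hj, hi]
    · simp [hj, Nat.sub_add_cancel (Nat.one_le_iff_ne_zero.2 (hne j hj))]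
  rw [← sum_update_one_of_eq_zero hi, ← hupd, sum_add_distrib, sum_const, card_univ, smul_eq_mul,
    mul_one]

end CoordinateSums

section Blocks

variable {k : ℕ} (lam : ℝ) (μ : Fin k → ℝ) (h : Fin k → ℕ) (g : (Fin k → ℕ) → ℝ)

theorem hasSum_Aminus_mul :
    HasSum (fun h' => Aminus k μ h h' * g h')
      (∑ i ∈ sZero k h, μ i * g fun j => if j = i then 0 else h j + 1) :=
  hasSum_sum_ite_eq_mul _ _ _ g

theorem hasSum_Azero_mul :
    HasSum (fun h' => Azero k lam μ h h' * g h')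
      ((if 2 ≤ #(sZero k h) then ∑ i ∈ sZero k h, lam / #(sZero k h) * g (update h i 1) else 0)
        + ∑ j ∈ (sZero k h)ᶜ, μ j * g (update h j (h j - 1))) := by
  simp only [Azero, add_mul]
  refine HasSum.add ?_ (hasSum_sum_ite_eq_mul _ _ _ g)
  split_ifs
  · exact hasSum_sum_ite_eq_mul _ _ _ g
  · simp

theorem hasSum_Aplus_mul :
    HasSum (fun h' => Aplus k lam h h' * g h')
      (if #(sZero k h) = 1 then lam * g (fun j => h j - 1) else 0) := by
  split_ifs with hS
  · convert hasSum_ite_eq (fun j => h j - 1) (lam * g fun j => h j - 1) using 2 with h'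
    split_ifs with hh' <;> simp [Aplus, hS, hh']
  · simp [Aplus, hS]

theorem hasSum_Astar_mul (z : ℝ) :
    HasSum (fun h' => Astar k lam μ z h h' * g h')
      (z⁻¹ * ∑ i ∈ sZero k h, μ i * g (fun j => if j = i then 0 else h j + 1)
        + ((if 2 ≤ #(sZero k h) then
              ∑ i ∈ sZero k h, lam / #(sZero k h) * g (update h i 1) else 0)
            + ∑ j ∈ (sZero k h)ᶜ, μ j * g (update h j (h j - 1)))
        + z * if #(sZero k h) = 1 then lam * g (fun j => h j - 1) else 0) := by
  simp only [Astar, add_mul, mul_assoc]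
  exact (((hasSum_Aminus_mul μ h g).mul_left _).add (hasSum_Azero_mul lam μ h g)).add
    ((hasSum_Aplus_mul lam h g).mul_left _)

end Blocks

theorem mem_sZero {k : ℕ} {h : Fin k → ℕ} {i : Fin k} : i ∈ sZero k h ↔ h i = 0 := by
  simp [sZero]

theorem hasSum_Astar_mul_inv_pow {k : ℕ} (lam : ℝ) (μ : Fin k → ℝ) {x : ℝ} (hx : x ≠ 0)
    {h : Fin k → ℕ} (hS : (sZero k h).Nonempty) :
    HasSum (fun h' => Astar k lam μ (x ^ k)⁻¹ h h' * (x ^ ∑ i, h' i)⁻¹)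
      ((x * ∑ i, μ i + lam / x) * (x ^ ∑ i, h i)⁻¹) := by
  set Y := (x ^ ∑ i, h i)⁻¹
  have hminus : ∀ i ∈ sZero k h, (x ^ ∑ j, if j = i then 0 else h j + 1)⁻¹ = x ^ 1 / x ^ k * Y :=
    fun i hi => inv_pow_eq_of_add_eq hx (by
      simpa using sum_succ_except_add_one (mem_sZero.1 hi))
  have hup : ∀ i ∈ sZero k h, (x ^ ∑ j, update h i 1 j)⁻¹ = x ^ 0 / x ^ 1 * Y :=
    fun i hi => inv_pow_eq_of_add_eq hx (by simp [sum_update_one_of_eq_zero (mem_sZero.1 hi)])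
  have hdown : ∀ j ∈ (sZero k h)ᶜ, (x ^ ∑ l, update h j (h j - 1) l)⁻¹ = x ^ 1 / x ^ 0 * Y :=
    fun j hj => inv_pow_eq_of_add_eq hx
      (sum_update_pred_add_one (mt mem_sZero.2 (mem_compl.1 hj)))
  convert hasSum_Astar_mul lam μ h _ _ using 1
  rw [sum_congr rfl fun i hi => congrArg (μ i * ·) (hminus i hi),
    sum_congr rfl fun j hj => congrArg (μ j * ·) (hdown j hj), ← sum_mul, ← sum_mul]
  obtain hS1 | hS2 : #(sZero k h) = 1 ∨ 2 ≤ #(sZero k h) := by have := hS.card_pos; omega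
  · obtain ⟨i, hSi⟩ := card_eq_one.1 hS1
    have hi : h i = 0 := mem_sZero.1 (by simp [hSi])
    have hne : ∀ j ≠ i, h j ≠ 0 := fun j hj h0 => hj (by simpa [hSi] using mem_sZero.2 h0)
    have hplus : (x ^ ∑ j, (h j - 1))⁻¹ = x ^ k / x ^ 1 * Y :=
      inv_pow_eq_of_add_eq hx (by simpa using sum_pred_add_card hi hne)
    rw [if_neg (by omega), if_pos hS1, hplus, ← sum_add_sum_compl (sZero k h) μ]
    field_simp
    ring
  · rw [if_pos hS2, if_neg (by omega), sum_congr rfl fun i hi => congrArg (_ * ·) (hup i hi),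
      sum_const, nsmul_eq_mul, ← sum_add_sum_compl (sZero k h) μ]
    have hcard : (#(sZero k h) : ℝ) ≠ 0 := by norm_cast; omega
    field_simp
    ring

theorem right_invariant_vector_general
    (k : ℕ) (lam : ℝ) (μ : Fin k → ℝ)
    (hlam : 0 < lam) (hμ : ∀ i, 0 < μ i)
    (hnorm : lam + ∑ i, μ i = 1)
    :
    ∀ h : Fin k → ℕ, (∃ i, h i = 0) →
      (∑' h' : Fin k → ℕ,
          Astar k lam μ ((rho k lam μ ^ k)⁻¹) h h' * (rho k lam μ ^ (∑ i, h' i))⁻¹)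
        = (rho k lam μ ^ (∑ i, h i))⁻¹ := by
  rintro h ⟨i, hi⟩
  have hμ_sum : 0 < ∑ j, μ j := sum_pos (fun j _ => hμ j) ⟨i, mem_univ i⟩
  have hρ : rho k lam μ ≠ 0 := div_ne_zero hlam.ne' hμ_sum.ne'
  have hbalance : rho k lam μ * ∑ j, μ j + lam / rho k lam μ = 1 := by
    rw [rho]
    field_simp
    linarith
  rw [(hasSum_Astar_mul_inv_pow lam μ hρ ⟨i, mem_sZero.2 hi⟩).tsum_eq, hbalance, one_mul]

/-- **Right invariant vector:** with `y_h = ρ^{−(h₁+⋯+h_k)}` one has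
`A_*(ρ^{−k}) y = y` on `H`. -/
theorem right_invariant_vector
    (k : ℕ) (hk : 2 ≤ k) (lam : ℝ) (μ : Fin k → ℝ)
    (hlam : 0 < lam) (hμ : ∀ i, 0 < μ i)
    (hnorm : lam + ∑ i, μ i = 1)
    (hρ : rho k lam μ < 1)
    :
    ∀ h : Fin k → ℕ, (∃ i, h i = 0) →
      (∑' h' : Fin k → ℕ,
          Astar k lam μ ((rho k lam μ ^ k)⁻¹) h h' * (rho k lam μ ^ (∑ i, h' i))⁻¹)
        = (rho k lam μ ^ (∑ i, h i))⁻¹ :=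
  right_invariant_vector_general k lam μ hlam hμ hnorm
end

section
/- Fix θ ∈ ℝ^{k+1}. If either (a) φ_{0U}(θ) < ∞ and 1 − γ_{+U}(θ) > 0 for every nonempty U ⊆ J, or (b) there is a subset 𝒜 of the collection 𝒦 of nonempty subsets of J with γ_{+U}(θ) < 1 and γ_{0U}(θ) < 1 for every U ∈ 𝒦∖𝒜 and φ_{+U'}(θ) < ∞ and φ_{0U'}(θ) < ∞ for every U' ∈ 𝒜, then the full stationary moment generating function is finite: φ(θ) < ∞. -/
open Filter Topology
open scoped ENNReal

noncomputable section

/-- Index set of the shortest queues: the zero coordinates of the difference vector. -/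
def zeroSet (k : ℕ) (y : Fin k → ℕ) : Finset (Fin k) :=
  Finset.univ.filter (fun i => y i = 0)

/-- One-step transition probability of the uniformized JSQ chain `Z = (M, Y)` on
`ℕ × (Fin k → ℕ)`, where `M` is the minimum queue length and `Y` the vector of
differences from the minimum. -/
def jsqP (k : ℕ) (lam : ℝ) (μ : Fin k → ℝ) (s s' : ℕ × (Fin k → ℕ)) : ℝ :=
  (if (zeroSet k s.2).card = 1 then
      (if s' = (s.1 + 1, fun j => s.2 j - 1) then lam else 0)
    else
      ∑ i ∈ zeroSet k s.2,
        (if s' = (s.1, Function.update s.2 i 1) then lam / (zeroSet k s.2).card else 0))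
  + (∑ j ∈ (zeroSet k s.2)ᶜ,
      (if s' = (s.1, Function.update s.2 j (s.2 j - 1)) then μ j else 0))
  + (∑ i ∈ zeroSet k s.2,
      (if s' = (if s.1 = 0 then s else (s.1 - 1, fun j => if j = i then 0 else s.2 j + 1))
        then μ i else 0))

/-- The exponential weight `e^{θ·Z}` for `θ ∈ ℝ^{k+1}` and a state `Z = (m, y)`. -/
def expWeight (k : ℕ) (θ : Fin (k + 1) → ℝ) (s : ℕ × (Fin k → ℕ)) : ℝ :=
  Real.exp (θ 0 * (s.1 : ℝ) + ∑ i : Fin k, θ i.succ * (s.2 i : ℝ))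

/-- The stationary moment generating function `φ(θ) = E[e^{θ·Z}] ∈ [0,∞]`. -/
def phi (k : ℕ) (π : ℕ × (Fin k → ℕ) → ℝ) (θ : Fin (k + 1) → ℝ) : ℝ≥0∞ :=
  ∑' s : ℕ × (Fin k → ℕ), ENNReal.ofReal (π s * expWeight k θ s)

/-- `φ_{+U}(θ) = E[e^{θ·Z} 1(Z ∈ S_{+U})]`. -/
def phiPlus (k : ℕ) (π : ℕ × (Fin k → ℕ) → ℝ) (U : Finset (Fin k))
    (θ : Fin (k + 1) → ℝ) : ℝ≥0∞ :=
  ∑' s : ℕ × (Fin k → ℕ),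
    if 1 ≤ s.1 ∧ zeroSet k s.2 = U then ENNReal.ofReal (π s * expWeight k θ s) else 0

/-- `φ_{0U}(θ) = E[e^{θ·Z} 1(Z ∈ S_{0U})]`. -/
def phiZero (k : ℕ) (π : ℕ × (Fin k → ℕ) → ℝ) (U : Finset (Fin k))
    (θ : Fin (k + 1) → ℝ) : ℝ≥0∞ :=
  ∑' s : ℕ × (Fin k → ℕ),
    if s.1 = 0 ∧ zeroSet k s.2 = U then ENNReal.ofReal (π s * expWeight k θ s) else 0

/-- The mgf `γ_{+U}(θ)` of the one-step increment from states in `S_{+U}`. -/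
def gammaPlus (k : ℕ) (lam : ℝ) (μ : Fin k → ℝ) (U : Finset (Fin k))
    (θ : Fin (k + 1) → ℝ) : ℝ :=
  (if U.card = 1 then lam * Real.exp (θ 0 - ∑ j ∈ Uᶜ, θ j.succ)
    else ∑ i ∈ U, (lam / U.card) * Real.exp (θ i.succ))
  + ∑ j ∈ Uᶜ, μ j * Real.exp (-θ j.succ)
  + ∑ i ∈ U, μ i * Real.exp (-θ 0 + ∑ j ∈ Finset.univ.erase i, θ j.succ)

/-- The mgf `γ_{0U}(θ)` of the one-step increment from states in `S_{0U}`. -/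
def gammaZero (k : ℕ) (lam : ℝ) (μ : Fin k → ℝ) (U : Finset (Fin k))
    (θ : Fin (k + 1) → ℝ) : ℝ :=
  (if U.card = 1 then lam * Real.exp (θ 0 - ∑ j ∈ Uᶜ, θ j.succ)
    else ∑ i ∈ U, (lam / U.card) * Real.exp (θ i.succ))
  + ∑ j ∈ Uᶜ, μ j * Real.exp (-θ j.succ)
  + ∑ i ∈ U, μ i

end

/-!
For `f = e^{θ·z}` the one-step mean of the chain is `P f = γ f`, where `γ` is `γ_{0U}(θ)` or
`γ_{+U}(θ)` according to the current state. Since only finitely many `U` occur, `γ ≤ c < 1` off a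
set of states whose contribution to `φ(θ)` is finite by hypothesis, and stationarity
`E[P f(Z)] = E[f(Z)]` gives `φ ≤ c φ + (finite)`. As `φ` might a priori be infinite, stationarity
is applied to the truncations `min(e^{θ·z}, n)` instead, and the resulting bound, uniform in `n`,
passes to the limit.
-/

theorem exists_lt_forall_le_of_fintype {ι β : Type*} [Fintype ι] [LinearOrder β] [NoMinOrder β]
    (f : ι → β) (P : ι → Prop) {a : β} (h : ∀ i, P i → f i < a) :
    ∃ c < a, ∀ i, P i → f i ≤ c := by
  classical
  obtain ⟨c₀, hc₀⟩ := exists_lt a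
  let S := insert c₀ ((Finset.univ.filter P).image f)
  refine ⟨S.max' (Finset.insert_nonempty _ _), (Finset.max'_lt_iff _ _).2 ?_,
    fun i hi => S.le_max' _ ?_⟩
  · simpa [S, hc₀] using h
  · simpa [S] using Or.inr ⟨i, hi, rfl⟩

theorem hasSum_ite_eq_mul {β R : Type*} [DecidableEq β] [NonUnitalNonAssocSemiring R]
    [TopologicalSpace R] (b : β) (c : R) (f : β → R) :
    HasSum (fun b' => (if b' = b then c else 0) * f b') (c * f b) := by
  convert hasSum_ite_eq b (c * f b) using 1
  ext b'
  split_ifs with h <;> simp [h]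

theorem ENNReal.le_div_of_le_mul_add {a b c : ℝ≥0∞} (ha : a ≠ ⊤) (hc : c < 1)
    (h : a ≤ c * a + b) : a ≤ b / (1 - c) := by
  rw [ENNReal.le_div_iff_mul_le (Or.inl (tsub_pos_of_lt hc).ne') (Or.inl (by simp)),
    ENNReal.mul_sub fun _ _ => ha, mul_one, tsub_le_iff_left, mul_comm]
  exact h

section StationaryDrift

variable {α : Type*} {q : α → ℝ≥0∞} {p : α → α → ℝ≥0∞}

theorem tsum_mul_tsum_kernel_eq (hstat : ∀ t, ∑' s, q s * p s t = q t) (g : α → ℝ≥0∞) :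
    ∑' s, q s * ∑' t, p s t * g t = ∑' t, q t * g t := by
  calc ∑' s, q s * ∑' t, p s t * g t = ∑' t, ∑' s, q s * p s t * g t := by
        rw [ENNReal.tsum_comm]; simp_rw [← ENNReal.tsum_mul_left, mul_assoc]
    _ = ∑' t, q t * g t := by simp_rw [ENNReal.tsum_mul_right, hstat]

theorem tsum_mul_ne_top_of_le (hq : ∑' s, q s ≠ ⊤) {g : α → ℝ≥0∞} {n : ℝ≥0∞} (hn : n ≠ ⊤)
    (hg : ∀ s, g s ≤ n) : ∑' s, q s * g s ≠ ⊤ :=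
  ne_top_of_le_ne_top (ENNReal.mul_ne_top hq hn)
    ((ENNReal.tsum_le_tsum fun s => mul_le_mul_right (hg s) _).trans_eq ENNReal.tsum_mul_right)

/-- The drift inequality tested against the bounded function `min F n`, for which stationarity
applies; the mass above level `n` is finite and cancels. -/
theorem tsum_truncated_le_of_drift (hq : ∑' s, q s ≠ ⊤) (hrow : ∀ s, ∑' t, p s t ≤ 1)
    (hstat : ∀ t, ∑' s, q s * p s t = q t) {F b : α → ℝ≥0∞} {c : ℝ≥0∞}
    (hdrift : ∀ s, q s ≠ 0 → ∑' t, p s t * F t ≤ c * F s + b s) {n : ℝ≥0∞} (hn : n ≠ ⊤) :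
    ∑' s, q s * (if F s < n then F s else 0)
      ≤ c * ∑' s, q s * (if F s < n then F s else 0) + ∑' s, q s * b s := by
  set below : α → ℝ≥0∞ := fun s => if F s < n then F s else 0
  set above : α → ℝ≥0∞ := fun s => if F s < n then 0 else n
  have hF : ∀ s, below s + above s ≤ F s := fun s => by
    simp only [below, above]; split_ifs with h
    · simp
    · simpa using not_lt.1 h
  have hbounded : ∀ s, below s + above s ≤ n := fun s => by
    simp only [below, above]; split_ifs with h
    · simpa using h.le
    · simp
  have hstep : ∀ s, q s * ∑' t, p s t * (below t + above t)
      ≤ (c * (q s * below s) + q s * b s) + q s * above s := by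
    intro s
    by_cases hs : F s < n
    · by_cases hq0 : q s = 0
      · simp [hq0]
      calc q s * ∑' t, p s t * (below t + above t) ≤ q s * (c * F s + b s) :=
            mul_le_mul_right ((ENNReal.tsum_le_tsum fun t => mul_le_mul_right (hF t) _).trans
              (hdrift s hq0)) _
        _ = _ := by simp only [below, above, hs, if_true]; ring
    · calc q s * ∑' t, p s t * (below t + above t) ≤ q s * ((∑' t, p s t) * n) :=
            mul_le_mul_right ((ENNReal.tsum_le_tsum fun t => mul_le_mul_right (hbounded t) _).trans_eq
              ENNReal.tsum_mul_right) _
        _ ≤ q s * above s := by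
            simp only [above, hs, if_false]
            exact mul_le_mul_right (mul_le_of_le_one_left' (hrow s)) _
        _ ≤ _ := le_add_self
  have habove : ∑' s, q s * above s ≠ ⊤ :=
    tsum_mul_ne_top_of_le hq hn fun s => by simp only [above]; split_ifs <;> simp
  refine (ENNReal.add_le_add_iff_right habove).1 ?_
  calc ∑' s, q s * below s + ∑' s, q s * above s
      = ∑' s, q s * ∑' t, p s t * (below t + above t) := by
        rw [tsum_mul_tsum_kernel_eq hstat, ← ENNReal.tsum_add]; simp_rw [mul_add]
    _ ≤ _ := ENNReal.tsum_le_tsum hstep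
    _ = _ := by rw [ENNReal.tsum_add, ENNReal.tsum_add, ENNReal.tsum_mul_left]

theorem tsum_mul_le_of_drift (hq : ∑' s, q s ≠ ⊤) (hrow : ∀ s, ∑' t, p s t ≤ 1)
    (hstat : ∀ t, ∑' s, q s * p s t = q t) {F b : α → ℝ≥0∞} {c : ℝ≥0∞} (hF : ∀ s, F s ≠ ⊤)
    (hc : c < 1) (hdrift : ∀ s, q s ≠ 0 → ∑' t, p s t * F t ≤ c * F s + b s) :
    ∑' s, q s * F s ≤ (∑' s, q s * b s) / (1 - c) := by
  rw [ENNReal.tsum_eq_iSup_sum]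
  refine iSup_le fun S => ?_
  have hS : ∑ s ∈ S, F s ≠ ⊤ := ENNReal.sum_ne_top.2 fun s _ => hF s
  set n := ∑ s ∈ S, F s + 1
  have hn : n ≠ ⊤ := ENNReal.add_ne_top.2 ⟨hS, ENNReal.one_ne_top⟩
  have hlt : ∀ s ∈ S, F s < n := fun s hs =>
    (Finset.single_le_sum (fun _ _ => zero_le) hs).trans_lt (ENNReal.lt_add_right hS one_ne_zero)
  have hT : ∑' s, q s * (if F s < n then F s else 0) ≠ ⊤ :=
    tsum_mul_ne_top_of_le hq hn fun s => by
      split_ifs with h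
      · exact h.le
      · exact zero_le
  calc ∑ s ∈ S, q s * F s = ∑ s ∈ S, q s * (if F s < n then F s else 0) :=
        Finset.sum_congr rfl fun s hs => by rw [if_pos (hlt s hs)]
    _ ≤ ∑' s, q s * (if F s < n then F s else 0) := ENNReal.sum_le_tsum S
    _ ≤ _ := ENNReal.le_div_of_le_mul_add hT hc
        (tsum_truncated_le_of_drift hq hrow hstat hdrift hn)

end StationaryDrift

section JSQ

variable {k : ℕ} {lam : ℝ} {μ : Fin k → ℝ}

theorem mem_zeroSet {y : Fin k → ℕ} {i : Fin k} : i ∈ zeroSet k y ↔ y i = 0 := by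
  simp [zeroSet]

/-- `E[f(Z₁) | Z₀ = s]` for the JSQ chain. -/
noncomputable def jsqStepMean (k : ℕ) (lam : ℝ) (μ : Fin k → ℝ) (f : ℕ × (Fin k → ℕ) → ℝ)
    (s : ℕ × (Fin k → ℕ)) : ℝ :=
  (if (zeroSet k s.2).card = 1 then lam * f (s.1 + 1, fun j => s.2 j - 1)
    else ∑ i ∈ zeroSet k s.2, lam / (zeroSet k s.2).card * f (s.1, Function.update s.2 i 1))
  + ∑ j ∈ (zeroSet k s.2)ᶜ, μ j * f (s.1, Function.update s.2 j (s.2 j - 1))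
  + ∑ i ∈ zeroSet k s.2, μ i *
      f (if s.1 = 0 then s else (s.1 - 1, fun j => if j = i then 0 else s.2 j + 1))

noncomputable def jsqGamma (k : ℕ) (lam : ℝ) (μ : Fin k → ℝ) (θ : Fin (k + 1) → ℝ)
    (s : ℕ × (Fin k → ℕ)) : ℝ :=
  if s.1 = 0 then gammaZero k lam μ (zeroSet k s.2) θ else gammaPlus k lam μ (zeroSet k s.2) θ

theorem jsqP_nonneg (hlam : 0 ≤ lam) (hμ : ∀ i, 0 ≤ μ i) (s t : ℕ × (Fin k → ℕ)) :
    0 ≤ jsqP k lam μ s t := by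
  unfold jsqP
  refine add_nonneg (add_nonneg ?_ ?_) ?_
  · split_ifs <;> first
      | exact hlam
      | exact le_rfl
      | exact Finset.sum_nonneg fun i _ => ite_nonneg (div_nonneg hlam (Nat.cast_nonneg _)) le_rfl
  · exact Finset.sum_nonneg fun j _ => ite_nonneg (hμ j) le_rfl
  · exact Finset.sum_nonneg fun i _ => ite_nonneg (hμ i) le_rfl

theorem hasSum_jsqP_mul (f : ℕ × (Fin k → ℕ) → ℝ) (s : ℕ × (Fin k → ℕ)) :
    HasSum (fun t => jsqP k lam μ s t * f t) (jsqStepMean k lam μ f s) := by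
  simp only [jsqP, jsqStepMean, add_mul, Finset.sum_mul]
  refine .add (.add ?_ (hasSum_sum fun j _ => hasSum_ite_eq_mul _ _ f))
    (hasSum_sum fun i _ => hasSum_ite_eq_mul _ _ f)
  split_ifs
  · exact hasSum_ite_eq_mul _ _ f
  · simp only [Finset.sum_mul]
    exact hasSum_sum fun i _ => hasSum_ite_eq_mul _ _ f

theorem jsqStepMean_one_le_one (hlam : 0 ≤ lam) (hnorm : lam + ∑ i, μ i = 1)
    (s : ℕ × (Fin k → ℕ)) : jsqStepMean k lam μ (fun _ => 1) s ≤ 1 := by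
  have harrival : (if (zeroSet k s.2).card = 1 then lam
      else ∑ _i ∈ zeroSet k s.2, lam / (zeroSet k s.2).card) ≤ lam := by
    split_ifs
    · exact le_rfl
    · rw [Finset.sum_const, nsmul_eq_mul]
      rcases (zeroSet k s.2).card.eq_zero_or_pos with h | h
      · simp [h, hlam]
      · rw [mul_div_cancel₀ _ (by positivity)]
  simp only [jsqStepMean, mul_one]
  linarith [Finset.sum_compl_add_sum (zeroSet k s.2) μ]

theorem jsqP_le_one (hlam : 0 ≤ lam) (hμ : ∀ i, 0 ≤ μ i) (hnorm : lam + ∑ i, μ i = 1)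
    (s t : ℕ × (Fin k → ℕ)) : jsqP k lam μ s t ≤ 1 := by
  simpa using (le_hasSum (hasSum_jsqP_mul (fun _ => 1) s) t fun t' _ => by
    simpa using jsqP_nonneg hlam hμ s t').trans (jsqStepMean_one_le_one hlam hnorm s)

theorem tsum_ofReal_jsqP_mul (hlam : 0 ≤ lam) (hμ : ∀ i, 0 ≤ μ i)
    {f : ℕ × (Fin k → ℕ) → ℝ} (hf : ∀ t, 0 ≤ f t) (s : ℕ × (Fin k → ℕ)) :
    ∑' t, ENNReal.ofReal (jsqP k lam μ s t) * ENNReal.ofReal (f t)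
      = ENNReal.ofReal (jsqStepMean k lam μ f s) := by
  have h := hasSum_jsqP_mul (lam := lam) (μ := μ) f s
  simp_rw [← ENNReal.ofReal_mul (jsqP_nonneg hlam hμ s _)]
  rw [← ENNReal.ofReal_tsum_of_nonneg (fun t => mul_nonneg (jsqP_nonneg hlam hμ s t) (hf t))
    h.summable, h.tsum_eq]

theorem tsum_ofReal_jsqP_le_one (hlam : 0 ≤ lam) (hμ : ∀ i, 0 ≤ μ i)
    (hnorm : lam + ∑ i, μ i = 1) (s : ℕ × (Fin k → ℕ)) :
    ∑' t, ENNReal.ofReal (jsqP k lam μ s t) ≤ 1 := by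
  have h := tsum_ofReal_jsqP_mul hlam hμ (f := fun _ => 1) (fun _ => zero_le_one) s
  simp only [ENNReal.ofReal_one, mul_one] at h
  exact h ▸ ENNReal.ofReal_le_one.2 (jsqStepMean_one_le_one hlam hnorm s)

theorem tsum_ofReal_mul_jsqP (hlam : 0 ≤ lam) (hμ : ∀ i, 0 ≤ μ i)
    (hnorm : lam + ∑ i, μ i = 1) {π : ℕ × (Fin k → ℕ) → ℝ} (hπnn : ∀ s, 0 ≤ π s)
    (hπsum : Summable π) (hπstat : ∀ t, ∑' s, π s * jsqP k lam μ s t = π t)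
    (t : ℕ × (Fin k → ℕ)) :
    ∑' s, ENNReal.ofReal (π s) * ENNReal.ofReal (jsqP k lam μ s t) = ENNReal.ofReal (π t) := by
  have hnn s : 0 ≤ π s * jsqP k lam μ s t := mul_nonneg (hπnn s) (jsqP_nonneg hlam hμ s t)
  simp_rw [← ENNReal.ofReal_mul (hπnn _)]
  rw [← ENNReal.ofReal_tsum_of_nonneg hnn (hπsum.of_nonneg_of_le hnn fun s =>
    mul_le_of_le_one_right (hπnn s) (jsqP_le_one hlam hμ hnorm s t)), hπstat]

variable (θ : Fin (k + 1) → ℝ)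

theorem expWeight_nonneg (s : ℕ × (Fin k → ℕ)) : 0 ≤ expWeight k θ s :=
  (Real.exp_pos _).le

theorem expWeight_eq_exp_mul (s t : ℕ × (Fin k → ℕ)) :
    expWeight k θ t = Real.exp (θ 0 * ((t.1 : ℝ) - s.1)
      + ∑ j, θ j.succ * ((t.2 j : ℝ) - s.2 j)) * expWeight k θ s := by
  rw [expWeight, expWeight, ← Real.exp_add]
  congr 1
  simp only [mul_sub, Finset.sum_sub_distrib]
  ring

theorem expWeight_arrival (m : ℕ) (y : Fin k → ℕ) :
    expWeight k θ (m + 1, fun j => y j - 1)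
      = Real.exp (θ 0 - ∑ j ∈ (zeroSet k y)ᶜ, θ j.succ) * expWeight k θ (m, y) := by
  rw [expWeight_eq_exp_mul θ (m, y)]
  congr 2
  have hterm : ∀ j, θ j.succ * (((y j - 1 : ℕ) : ℝ) - y j)
      = -if j ∈ (zeroSet k y)ᶜ then θ j.succ else 0 := by
    intro j
    by_cases hj : y j = 0
    · simp [hj, mem_zeroSet]
    · simp [hj, mem_zeroSet, Nat.cast_sub (Nat.one_le_iff_ne_zero.2 hj)]
  simp only [hterm, Finset.sum_neg_distrib, Finset.sum_ite_mem, Finset.univ_inter]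
  push_cast
  ring

theorem expWeight_update (m : ℕ) (y : Fin k → ℕ) (j : Fin k) (v : ℕ) :
    expWeight k θ (m, Function.update y j v)
      = Real.exp (θ j.succ * ((v : ℝ) - y j)) * expWeight k θ (m, y) := by
  rw [expWeight_eq_exp_mul θ (m, y)]
  congr 2
  rw [Finset.sum_eq_single j (fun l _ hl => by simp [Function.update_of_ne hl]) (by simp)]
  simp

theorem expWeight_service (m : ℕ) (y : Fin k → ℕ) {i : Fin k} (hi : y i = 0) :
    expWeight k θ (m, fun j => if j = i then 0 else y j + 1)
      = Real.exp (-θ 0 + ∑ j ∈ Finset.univ.erase i, θ j.succ) * expWeight k θ (m + 1, y) := by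
  rw [expWeight_eq_exp_mul θ (m + 1, y)]
  congr 2
  rw [← Finset.add_sum_erase _ _ (Finset.mem_univ i),
    Finset.sum_congr rfl (g := fun j => θ j.succ) fun j hj => ?_]
  · simp [hi]
  · simp [Finset.ne_of_mem_erase hj]

theorem jsqStepMean_expWeight (s : ℕ × (Fin k → ℕ)) :
    jsqStepMean k lam μ (expWeight k θ) s = jsqGamma k lam μ θ s * expWeight k θ s := by
  obtain ⟨m, y⟩ := s
  have harrival : (if (zeroSet k y).card = 1 then lam * expWeight k θ (m + 1, fun j => y j - 1)
        else ∑ i ∈ zeroSet k y, lam / (zeroSet k y).card * expWeight k θ (m, Function.update y i 1))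
      = (if (zeroSet k y).card = 1 then lam * Real.exp (θ 0 - ∑ j ∈ (zeroSet k y)ᶜ, θ j.succ)
        else ∑ i ∈ zeroSet k y, lam / (zeroSet k y).card * Real.exp (θ i.succ))
          * expWeight k θ (m, y) := by
    split_ifs
    · rw [expWeight_arrival, mul_assoc]
    · rw [Finset.sum_mul]
      refine Finset.sum_congr rfl fun i hi => ?_
      rw [expWeight_update, mem_zeroSet.1 hi]
      simp [mul_assoc]
  have hdeparture : ∑ j ∈ (zeroSet k y)ᶜ, μ j * expWeight k θ (m, Function.update y j (y j - 1))
      = (∑ j ∈ (zeroSet k y)ᶜ, μ j * Real.exp (-θ j.succ)) * expWeight k θ (m, y) := by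
    rw [Finset.sum_mul]
    refine Finset.sum_congr rfl fun j hjU => ?_
    have hj : y j ≠ 0 := by simpa [mem_zeroSet] using hjU
    rw [expWeight_update, Nat.cast_sub (Nat.one_le_iff_ne_zero.2 hj)]
    simp [mul_assoc]
  rcases m with _ | m
  · simp only [jsqStepMean, jsqGamma, gammaZero, if_true, harrival, hdeparture]
    rw [← Finset.sum_mul]
    ring
  · have hservice :
        ∑ i ∈ zeroSet k y, μ i * expWeight k θ (m, fun j => if j = i then 0 else y j + 1)
        = (∑ i ∈ zeroSet k y, μ i * Real.exp (-θ 0 + ∑ j ∈ Finset.univ.erase i, θ j.succ))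
          * expWeight k θ (m + 1, y) := by
      rw [Finset.sum_mul]
      refine Finset.sum_congr rfl fun i hi => ?_
      rw [expWeight_service θ m y (mem_zeroSet.1 hi), mul_assoc]
    simp only [jsqStepMean, jsqGamma, gammaPlus, Nat.add_one_ne_zero, if_false,
      Nat.add_sub_cancel, harrival, hdeparture, hservice]
    ring

theorem jsqGamma_le_max (s : ℕ × (Fin k → ℕ)) :
    jsqGamma k lam μ θ s
      ≤ max (gammaPlus k lam μ (zeroSet k s.2) θ) (gammaZero k lam μ (zeroSet k s.2) θ) := by
  unfold jsqGamma
  split_ifs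
  · exact le_max_right _ _
  · exact le_max_left _ _

end JSQ

section JSQFiniteness

variable {k : ℕ} {lam : ℝ} {μ : Fin k → ℝ} {π : ℕ × (Fin k → ℕ) → ℝ} {θ : Fin (k + 1) → ℝ}

theorem tsum_ite_eq_sum_phiZero_add_sum_phiPlus (Z P : Finset (Finset (Fin k))) :
    ∑' s, (if s.1 = 0 ∧ zeroSet k s.2 ∈ Z ∨ 1 ≤ s.1 ∧ zeroSet k s.2 ∈ P
        then ENNReal.ofReal (π s * expWeight k θ s) else 0)
      = ∑ U ∈ Z, phiZero k π U θ + ∑ U ∈ P, phiPlus k π U θ := by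
  simp only [phiZero, phiPlus, ← Summable.tsum_finsetSum (fun _ _ => ENNReal.summable),
    ← ENNReal.tsum_add]
  refine tsum_congr fun s => ?_
  rcases s.1.eq_zero_or_pos with h | h
  · simp [h]
  · simp [Nat.one_le_iff_ne_zero.2 h.ne', h.ne']

theorem phi_lt_top_of_jsqGamma_le (hlam : 0 ≤ lam) (hμ : ∀ i, 0 ≤ μ i)
    (hnorm : lam + ∑ i, μ i = 1) (hπnn : ∀ s, 0 ≤ π s) (hπsum : HasSum π 1)
    (hπstat : ∀ t, ∑' s, π s * jsqP k lam μ s t = π t) (Z P : Finset (Finset (Fin k)))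
    (hZ : ∀ U ∈ Z, phiZero k π U θ < ⊤) (hP : ∀ U ∈ P, phiPlus k π U θ < ⊤) {c : ℝ} (hc : c < 1)
    (hγ : ∀ s, π s ≠ 0 → ¬(s.1 = 0 ∧ zeroSet k s.2 ∈ Z ∨ 1 ≤ s.1 ∧ zeroSet k s.2 ∈ P) →
      jsqGamma k lam μ θ s ≤ c) :
    phi k π θ < ⊤ := by
  obtain ⟨C, hC⟩ := Finite.bddAbove_range fun U : Finset (Fin k) =>
    max (gammaPlus k lam μ U θ) (gammaZero k lam μ U θ)
  set good : ℕ × (Fin k → ℕ) → Prop :=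
    fun s => s.1 = 0 ∧ zeroSet k s.2 ∈ Z ∨ 1 ≤ s.1 ∧ zeroSet k s.2 ∈ P
  set F : ℕ × (Fin k → ℕ) → ℝ≥0∞ := fun s => ENNReal.ofReal (expWeight k θ s)
  set b : ℕ × (Fin k → ℕ) → ℝ≥0∞ := fun s => if good s then ENNReal.ofReal C * F s else 0
  have hmass : ∑' s, ENNReal.ofReal (π s) = 1 := by
    rw [← ENNReal.ofReal_tsum_of_nonneg hπnn hπsum.summable, hπsum.tsum_eq, ENNReal.ofReal_one]
  have hb : ∑' s, ENNReal.ofReal (π s) * b s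
      = ENNReal.ofReal C * (∑ U ∈ Z, phiZero k π U θ + ∑ U ∈ P, phiPlus k π U θ) := by
    rw [← tsum_ite_eq_sum_phiZero_add_sum_phiPlus, ← ENNReal.tsum_mul_left]
    refine tsum_congr fun s => ?_
    simp only [b, F]
    split_ifs
    · rw [ENNReal.ofReal_mul (hπnn s)]; ring
    · simp
  have hdrift : ∀ s, ENNReal.ofReal (π s) ≠ 0 →
      ∑' t, ENNReal.ofReal (jsqP k lam μ s t) * F t ≤ ENNReal.ofReal c * F s + b s := by
    intro s hs
    have hW := expWeight_nonneg θ s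
    rw [tsum_ofReal_jsqP_mul hlam hμ (expWeight_nonneg θ) s, jsqStepMean_expWeight]
    by_cases hg : good s
    · calc ENNReal.ofReal (jsqGamma k lam μ θ s * expWeight k θ s)
          ≤ ENNReal.ofReal (C * expWeight k θ s) := ENNReal.ofReal_le_ofReal
            (mul_le_mul_of_nonneg_right ((jsqGamma_le_max θ s).trans (hC ⟨_, rfl⟩)) hW)
        _ = b s := by simp only [b, F, hg, if_true, ENNReal.ofReal_mul' hW]
        _ ≤ _ := le_add_self
    · calc ENNReal.ofReal (jsqGamma k lam μ θ s * expWeight k θ s)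
          ≤ ENNReal.ofReal (c * expWeight k θ s) := ENNReal.ofReal_le_ofReal
            (mul_le_mul_of_nonneg_right (hγ s (fun h => hs (by simp [h])) hg) hW)
        _ = ENNReal.ofReal c * F s := ENNReal.ofReal_mul' hW
        _ ≤ _ := le_self_add
  have hc' : ENNReal.ofReal c < 1 := ENNReal.ofReal_lt_one.2 hc
  calc phi k π θ = ∑' s, ENNReal.ofReal (π s) * F s :=
        tsum_congr fun s => ENNReal.ofReal_mul (hπnn s)
    _ ≤ (∑' s, ENNReal.ofReal (π s) * b s) / (1 - ENNReal.ofReal c) :=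
        tsum_mul_le_of_drift (hmass ▸ ENNReal.one_ne_top) (tsum_ofReal_jsqP_le_one hlam hμ hnorm)
          (tsum_ofReal_mul_jsqP hlam hμ hnorm hπnn hπsum.summable hπstat)
          (fun _ => ENNReal.ofReal_ne_top) hc' hdrift
    _ < ⊤ := ENNReal.div_lt_top (hb ▸ ENNReal.mul_ne_top ENNReal.ofReal_ne_top
        (ENNReal.add_ne_top.2 ⟨(ENNReal.sum_lt_top.2 hZ).ne, (ENNReal.sum_lt_top.2 hP).ne⟩))
        (tsub_pos_of_lt hc').ne'

end JSQFiniteness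

theorem jsq_phi_finite_of_stationary_inequality_general
    (k : ℕ) (lam : ℝ) (μ : Fin k → ℝ)
    (hlam : 0 < lam) (hμ : ∀ i, 0 < μ i)
    (hnorm : lam + ∑ i, μ i = 1)
    (π : ℕ × (Fin k → ℕ) → ℝ)
    (hπnn : ∀ s, 0 ≤ π s)
    (hπsupp : ∀ s, π s ≠ 0 → ∃ i : Fin k, s.2 i = 0)
    (hπsum : HasSum π 1)
    (hπstat : ∀ s', (∑' s, π s * jsqP k lam μ s s') = π s')
    (θ : Fin (k + 1) → ℝ)
    (hab : (∀ U : Finset (Fin k), U.Nonempty →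
              phiZero k π U θ < ⊤ ∧ 0 < 1 - gammaPlus k lam μ U θ) ∨
           (∃ A : Finset (Finset (Fin k)), (∀ U ∈ A, Finset.Nonempty U) ∧
              (∀ U : Finset (Fin k), U.Nonempty → U ∉ A →
                gammaPlus k lam μ U θ < 1 ∧ gammaZero k lam μ U θ < 1) ∧
              (∀ U ∈ A, phiPlus k π U θ < ⊤ ∧ phiZero k π U θ < ⊤))) :
    phi k π θ < ⊤ := by
  have hU : ∀ s, π s ≠ 0 → (zeroSet k s.2).Nonempty := fun s hs =>
    (hπsupp s hs).imp fun _ => mem_zeroSet.2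
  have hfinite := phi_lt_top_of_jsqGamma_le (θ := θ) hlam.le (fun i => (hμ i).le) hnorm hπnn
    hπsum hπstat
  rcases hab with ha | ⟨A, -, hAγ, hAφ⟩
  · obtain ⟨c, hc, hcγ⟩ := exists_lt_forall_le_of_fintype (fun U => gammaPlus k lam μ U θ)
      Finset.Nonempty fun U hU => sub_pos.1 (ha U hU).2
    refine hfinite (Finset.univ.filter Finset.Nonempty) ∅
      (fun U hU => (ha U (Finset.mem_filter.1 hU).2).1) (by simp) hc fun s hs hgood => ?_
    have hm : s.1 ≠ 0 := fun hm => hgood (Or.inl ⟨hm, by simpa using hU s hs⟩)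
    simpa [jsqGamma, hm] using hcγ _ (hU s hs)
  · obtain ⟨c, hc, hcγ⟩ := exists_lt_forall_le_of_fintype
      (fun U => max (gammaPlus k lam μ U θ) (gammaZero k lam μ U θ)) (fun U => U.Nonempty ∧ U ∉ A)
      fun U hU => max_lt_iff.2 (hAγ U hU.1 hU.2)
    refine hfinite A A (fun U hU => (hAφ U hU).2) (fun U hU => (hAφ U hU).1) hc
      fun s hs hgood => (jsqGamma_le_max θ s).trans (hcγ _ ⟨hU s hs, fun hA => hgood ?_⟩)
    rcases s.1.eq_zero_or_pos with hm | hm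
    exacts [Or.inl ⟨hm, hA⟩, Or.inr ⟨hm, hA⟩]

/-- **Finiteness of the full stationary mgf:** under either set of conditions (a) or (b)
of the stationary-inequality lemma, `φ(θ) < ∞`. -/
theorem jsq_phi_finite_of_stationary_inequality
    (k : ℕ) (hk : 2 ≤ k) (lam : ℝ) (μ : Fin k → ℝ)
    (hlam : 0 < lam) (hμ : ∀ i, 0 < μ i)
    (hnorm : lam + ∑ i, μ i = 1)
    (hρ : rho k lam μ < 1)
    (π : ℕ × (Fin k → ℕ) → ℝ)
    (hπnn : ∀ s, 0 ≤ π s)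
    (hπsupp : ∀ s, π s ≠ 0 → ∃ i : Fin k, s.2 i = 0)
    (hπsum : HasSum π 1)
    (hπstat : ∀ s', (∑' s, π s * jsqP k lam μ s s') = π s')
    (θ : Fin (k + 1) → ℝ)
    (hab : (∀ U : Finset (Fin k), U.Nonempty →
              phiZero k π U θ < ⊤ ∧ 0 < 1 - gammaPlus k lam μ U θ) ∨
           (∃ A : Finset (Finset (Fin k)), (∀ U ∈ A, Finset.Nonempty U) ∧
              (∀ U : Finset (Fin k), U.Nonempty → U ∉ A →
                gammaPlus k lam μ U θ < 1 ∧ gammaZero k lam μ U θ < 1) ∧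
              (∀ U ∈ A, phiPlus k π U θ < ⊤ ∧ phiZero k π U θ < ⊤))) :
    phi k π θ < ⊤ :=
  jsq_phi_finite_of_stationary_inequality_general k lam μ hlam hμ hnorm π hπnn hπsupp hπsum hπstat θ
    hab
end

section
/- If η_0 > 0 and φ(η_0, 0·𝟙) = E[e^{η_0 M}] < ∞, then φ(η_0, (η_0/(k−1))𝟙) < ∞. -/
open Filter Topology
open scoped ENNReal

/-!
For `A ⊆ J` let `θ_A` carry `η₀` on `M`, `0` on the queues of `A` and `η₀ / (k - |A|)` on the
others. From a state whose shortest queues all lie in `A`, arrivals and departures from shortest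
queues leave `θ_A · Z` unchanged, while a departure from a queue outside `A` lowers it; hence
`E[e^{θ_A · Z₁} | Z₀] ≤ (1 - δ_A) e^{θ_A · Z₀}` there, with
`δ_A = (1 - e^{-η₀ / (k - |A|)}) Σ_{j ∉ A} μ_j > 0`. At the remaining states one step multiplies
the weight by at most `e^{η₀}`, and `e^{θ_A · Z} ≤ e^{θ_B · Z}` with `B = A ∪ U ⊋ A`. Stationarity
turns this drift into `δ_A φ(θ_A) ≤ C Σ_{B ⊋ A} φ(θ_B)`, so downward induction from
`θ_J = (η₀, 0)` makes every `φ(θ_A)` finite. The target direction agrees with `θ_{{i}}` on states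
with `Y_i = 0`, and the stationary law lives on such states.
-/

open Finset

def IsStationaryDist {S : Type*} (P : S → S → ℝ≥0∞) (π : S → ℝ≥0∞) : Prop :=
  ∀ s', ∑' s, π s * P s s' = π s'

namespace IsStationaryDist

variable {S : Type*} {P : S → S → ℝ≥0∞} {π : S → ℝ≥0∞}

theorem tsum_mul_tsum_mul (hπ : IsStationaryDist P π) (h : S → ℝ≥0∞) :
    ∑' s, π s * ∑' s', P s s' * h s' = ∑' s, π s * h s := by
  simp_rw [← ENNReal.tsum_mul_left, ← mul_assoc]
  rw [ENNReal.tsum_comm]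
  simp_rw [ENNReal.tsum_mul_right, hπ _]

theorem tsum_mul_le_of_drift (hπ : IsStationaryDist P π) {h e g : S → ℝ≥0∞}
    (hh : ∑' s, π s * h s ≠ ⊤) (hdrift : ∀ s, ∑' s', P s s' * h s' + e s ≤ h s + g s) :
    ∑' s, π s * e s ≤ ∑' s, π s * g s := by
  have hsum := ENNReal.tsum_le_tsum fun s => mul_le_mul_right (hdrift s) (π s)
  simp_rw [mul_add] at hsum
  rw [ENNReal.tsum_add, ENNReal.tsum_add, hπ.tsum_mul_tsum_mul] at hsum
  exact (ENNReal.add_le_add_iff_left hh).1 hsum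

theorem mul_tsum_le_of_drift (hπ : IsStationaryDist P π) (hπ_fin : ∑' s, π s ≠ ⊤)
    (hP : ∀ s, ∑' s', P s s' ≤ 1) {f g : S → ℝ≥0∞} {δ : ℝ≥0∞} (hf : ∀ s, f s ≠ ⊤)
    (hdrift : ∀ s, ∑' s', P s s' * f s' + δ * f s ≤ f s + g s) :
    δ * ∑' s, π s * f s ≤ ∑' s, π s * g s := by
  -- `min f N` has finite `π`-mean, so the drift inequality for it can be cancelled; then `N → ∞`.
  have truncated : ∀ N ≠ ⊤, δ * ∑' s, π s * (if f s ≤ N then f s else 0)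
      ≤ ∑' s, π s * g s := by
    intro N hN
    rw [← ENNReal.tsum_mul_left]
    simp_rw [mul_left_comm δ]
    refine hπ.tsum_mul_le_of_drift (h := fun s => min (f s) N) ?_ fun s => ?_
    · refine ne_top_of_le_ne_top (ENNReal.mul_ne_top hπ_fin hN) ?_
      rw [← ENNReal.tsum_mul_right]
      exact ENNReal.tsum_le_tsum fun s => by gcongr; exact min_le_right _ _
    split_ifs with hs
    · calc ∑' s', P s s' * min (f s') N + δ * f s
          ≤ ∑' s', P s s' * f s' + δ * f s := by gcongr; exact min_le_left _ _
        _ ≤ f s + g s := hdrift s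
        _ = min (f s) N + g s := by rw [min_eq_left hs]
    · calc ∑' s', P s s' * min (f s') N + δ * 0
          ≤ ∑' s', P s s' * N := by
            rw [mul_zero, add_zero]
            exact ENNReal.tsum_le_tsum fun s' => by gcongr; exact min_le_right _ _
        _ = (∑' s', P s s') * N := ENNReal.tsum_mul_right
        _ ≤ N := mul_le_of_le_one_left zero_le (hP s)
        _ = min (f s) N := (min_eq_right (not_le.1 hs).le).symm
        _ ≤ min (f s) N + g s := le_self_add
  rw [ENNReal.tsum_eq_iSup_sum, ENNReal.mul_iSup]
  refine iSup_le fun T => ?_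
  have hT : ∑ s ∈ T, f s ≠ ⊤ := ENNReal.sum_ne_top.2 fun s _ => hf s
  refine le_trans ?_ (truncated _ hT)
  gcongr
  calc ∑ s ∈ T, π s * f s
      = ∑ s ∈ T, π s * (if f s ≤ ∑ s ∈ T, f s then f s else 0) :=
        sum_congr rfl fun s hs => by rw [if_pos (single_le_sum (fun _ _ => zero_le) hs)]
    _ ≤ _ := ENNReal.sum_le_tsum T

end IsStationaryDist

namespace JSQ

variable {k : ℕ} {lam : ℝ} {μ : Fin k → ℝ}

theorem mem_zeroSet {y : Fin k → ℕ} {i : Fin k} : i ∈ zeroSet k y ↔ y i = 0 := by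
  simp [zeroSet]

/-- `E[f(Z₁) | Z₀ = s]` for the chain with transition matrix `jsqP`. -/
noncomputable def jsqMean (lam : ℝ) (μ : Fin k → ℝ) (f : ℕ × (Fin k → ℕ) → ℝ)
    (s : ℕ × (Fin k → ℕ)) : ℝ :=
  (if (zeroSet k s.2).card = 1 then lam * f (s.1 + 1, fun j => s.2 j - 1)
    else ∑ i ∈ zeroSet k s.2, lam / (zeroSet k s.2).card * f (s.1, Function.update s.2 i 1))
  + ∑ j ∈ (zeroSet k s.2)ᶜ, μ j * f (s.1, Function.update s.2 j (s.2 j - 1))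
  + ∑ i ∈ zeroSet k s.2, μ i *
      f (if s.1 = 0 then s else (s.1 - 1, fun j => if j = i then 0 else s.2 j + 1))

theorem hasSum_jsqP_mul (f : ℕ × (Fin k → ℕ) → ℝ) (s : ℕ × (Fin k → ℕ)) :
    HasSum (fun s' => jsqP k lam μ s s' * f s') (jsqMean lam μ f s) := by
  have point : ∀ t w, HasSum (fun s' => (if s' = t then w else 0) * f s') (w * f t) := by
    intro t w
    convert hasSum_ite_eq t (w * f t) using 1
    ext s'
    split_ifs with h <;> simp [h]
  simp only [jsqP, jsqMean, add_mul, sum_mul]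
  refine (HasSum.add ?_ (hasSum_sum fun j _ => point _ _)).add (hasSum_sum fun i _ => point _ _)
  split_ifs
  · exact point _ _
  · simpa only [sum_mul] using hasSum_sum fun i _ => point _ _

theorem expWeight_of_shift (θ : Fin (k + 1) → ℝ) {m m' : ℕ} {y y' : Fin k → ℕ} {a : ℝ}
    {b : Fin k → ℝ} (hm : (m' : ℝ) = m + a) (hy : ∀ j, (y' j : ℝ) = y j + b j) :
    expWeight k θ (m', y') = Real.exp (θ 0 * a + ∑ j, θ j.succ * b j) * expWeight k θ (m, y) := by
  simp only [expWeight, ← Real.exp_add, hm, hy, mul_add, sum_add_distrib]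
  ring_nf

theorem expWeight_update (θ : Fin (k + 1) → ℝ) (m : ℕ) (y : Fin k → ℕ) (i : Fin k) (c : ℕ) :
    expWeight k θ (m, Function.update y i c)
      = Real.exp (θ i.succ * (c - y i)) * expWeight k θ (m, y) := by
  rw [expWeight_of_shift θ (m := m) (y := y) (a := 0)
    (b := fun j => if j = i then (c - y i : ℝ) else 0) (by simp)
    fun j => by rcases eq_or_ne j i with rfl | h <;> simp [*]]
  simp

theorem expWeight_arrival (θ : Fin (k + 1) → ℝ) (m : ℕ) (y : Fin k → ℕ) :
    expWeight k θ (m + 1, fun j => y j - 1)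
      = Real.exp (θ 0 - ∑ j ∈ (zeroSet k y)ᶜ, θ j.succ) * expWeight k θ (m, y) := by
  rw [expWeight_of_shift θ (m := m) (y := y) (a := 1)
    (b := fun j => if j ∈ (zeroSet k y)ᶜ then -1 else 0) (by simp) fun j => ?_]
  · simp only [mul_ite, mul_neg, mul_one, mul_zero, sum_ite_mem, univ_inter, sum_neg_distrib,
      sub_eq_add_neg]
  · rcases eq_or_ne (y j) 0 with h | h
    · simp [mem_zeroSet, h]
    · simp [mem_zeroSet, h, Nat.cast_sub (Nat.one_le_iff_ne_zero.2 h), sub_eq_add_neg]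

theorem expWeight_departure (θ : Fin (k + 1) → ℝ) {m : ℕ} (hm : m ≠ 0) {y : Fin k → ℕ}
    {i : Fin k} (hi : y i = 0) :
    expWeight k θ (m - 1, fun j => if j = i then 0 else y j + 1)
      = Real.exp (-θ 0 + ∑ j ∈ univ.erase i, θ j.succ) * expWeight k θ (m, y) := by
  rw [expWeight_of_shift θ (m := m) (y := y) (a := -1)
    (b := fun j => if j ∈ univ.erase i then 1 else 0)
    (by simp [Nat.cast_sub (Nat.one_le_iff_ne_zero.2 hm)]; ring) fun j => ?_]
  · simp only [mul_ite, mul_one, mul_zero, sum_ite_mem, univ_inter, mul_neg]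
  · rcases eq_or_ne j i with rfl | h <;> simp [*]

theorem jsqMean_expWeight (θ : Fin (k + 1) → ℝ) (m : ℕ) (y : Fin k → ℕ) :
    jsqMean lam μ (expWeight k θ) (m, y)
      = (if m = 0 then gammaZero k lam μ (zeroSet k y) θ else gammaPlus k lam μ (zeroSet k y) θ)
        * expWeight k θ (m, y) := by
  set U := zeroSet k y
  have arrivals : (if U.card = 1 then lam * expWeight k θ (m + 1, fun j => y j - 1)
      else ∑ i ∈ U, lam / U.card * expWeight k θ (m, Function.update y i 1))
      = (if U.card = 1 then lam * Real.exp (θ 0 - ∑ j ∈ Uᶜ, θ j.succ)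
          else ∑ i ∈ U, lam / U.card * Real.exp (θ i.succ)) * expWeight k θ (m, y) := by
    split_ifs
    · rw [expWeight_arrival, mul_assoc]
    · rw [sum_mul]
      refine sum_congr rfl fun i hi => ?_
      rw [expWeight_update, mem_zeroSet.1 hi]
      simp [mul_assoc]
  have departures : ∑ j ∈ Uᶜ, μ j * expWeight k θ (m, Function.update y j (y j - 1))
      = (∑ j ∈ Uᶜ, μ j * Real.exp (-θ j.succ)) * expWeight k θ (m, y) := by
    rw [sum_mul]
    refine sum_congr rfl fun j hj => ?_
    have hj : y j ≠ 0 := fun h => mem_compl.1 hj (mem_zeroSet.2 h)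
    rw [expWeight_update, Nat.cast_sub (Nat.one_le_iff_ne_zero.2 hj)]
    simp [mul_assoc]
  have services : ∑ i ∈ U, μ i * expWeight k θ
        (if m = 0 then (m, y) else (m - 1, fun j => if j = i then 0 else y j + 1))
      = (if m = 0 then ∑ i ∈ U, μ i
          else ∑ i ∈ U, μ i * Real.exp (-θ 0 + ∑ j ∈ univ.erase i, θ j.succ))
        * expWeight k θ (m, y) := by
    split_ifs with hm
    · rw [sum_mul]
    · rw [sum_mul]
      refine sum_congr rfl fun i hi => ?_
      rw [expWeight_departure θ hm (mem_zeroSet.1 hi), mul_assoc]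
  simp only [jsqMean]
  rw [arrivals, departures, services, gammaZero, gammaPlus]
  split_ifs <;> ring

theorem arrival_mgf_le (hlam : 0 ≤ lam) (U : Finset (Fin k)) {a c : ℝ} {b : Fin k → ℝ}
    (ha : a ≤ c) (hb : ∀ i ∈ U, b i ≤ c) :
    (if U.card = 1 then lam * Real.exp a else ∑ i ∈ U, lam / U.card * Real.exp (b i))
      ≤ lam * Real.exp c := by
  split_ifs
  · gcongr
  · calc ∑ i ∈ U, lam / U.card * Real.exp (b i)
        ≤ ∑ i ∈ U, lam / U.card * Real.exp c := by
          gcongr with i hi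
          exact hb i hi
      _ = (U.card * (lam / U.card)) * Real.exp c := by rw [sum_const, nsmul_eq_mul, mul_assoc]
      _ ≤ lam * Real.exp c := by
          gcongr
          rcases U.eq_empty_or_nonempty with rfl | hU
          · simpa using hlam
          · rw [mul_div_cancel₀ _ (by simpa using hU.ne_empty)]

theorem total_rate_mul (hnorm : lam + ∑ i, μ i = 1) (U : Finset (Fin k)) (x : ℝ) :
    lam * x + ∑ j ∈ Uᶜ, μ j * x + ∑ i ∈ U, μ i * x = x := by
  rw [← sum_mul, ← sum_mul, ← add_mul, ← add_mul, add_assoc, add_comm (∑ j ∈ Uᶜ, μ j),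
    sum_add_sum_compl, hnorm, one_mul]

section ExpBound

variable (hlam : 0 ≤ lam) (hμ : ∀ i, 0 ≤ μ i) (hnorm : lam + ∑ i, μ i = 1)
  {θ : Fin (k + 1) → ℝ} (hθ : ∀ l, 0 ≤ θ l) (hsum : ∑ j : Fin k, θ j.succ ≤ θ 0)
include hlam hμ hnorm hθ hsum

theorem mgf_le_exp_of_le (U : Finset (Fin k)) {x : Fin k → ℝ}
    (hx : ∀ i ∈ U, x i ≤ Real.exp (θ 0)) :
    (if U.card = 1 then lam * Real.exp (θ 0 - ∑ j ∈ Uᶜ, θ j.succ)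
      else ∑ i ∈ U, lam / U.card * Real.exp (θ i.succ))
      + ∑ j ∈ Uᶜ, μ j * Real.exp (-θ j.succ) + ∑ i ∈ U, μ i * x i ≤ Real.exp (θ 0) := by
  have hsucc : ∀ j : Fin k, θ j.succ ≤ θ 0 :=
    fun j => (single_le_sum (fun j _ => hθ j.succ) (mem_univ j)).trans hsum
  calc _ ≤ lam * Real.exp (θ 0) + ∑ j ∈ Uᶜ, μ j * Real.exp (θ 0)
        + ∑ i ∈ U, μ i * Real.exp (θ 0) := by
        refine add_le_add (add_le_add (arrival_mgf_le hlam U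
          (sub_le_self _ (sum_nonneg fun j _ => hθ j.succ)) fun i _ => hsucc i) ?_) ?_
        · gcongr with j
          · exact hμ j
          · linarith [hθ j.succ, hθ 0]
        · exact sum_le_sum fun i hi => mul_le_mul_of_nonneg_left (hx i hi) (hμ i)
    _ = Real.exp (θ 0) := total_rate_mul hnorm U _

theorem gammaPlus_le_exp (U : Finset (Fin k)) : gammaPlus k lam μ U θ ≤ Real.exp (θ 0) :=
  mgf_le_exp_of_le hlam hμ hnorm hθ hsum U fun i _ => Real.exp_le_exp.2 <| by
    linarith [hθ 0, sum_le_sum_of_subset_of_nonneg (erase_subset i univ) fun j _ _ => hθ j.succ]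

theorem gammaZero_le_exp (U : Finset (Fin k)) : gammaZero k lam μ U θ ≤ Real.exp (θ 0) := by
  simpa only [gammaZero, mul_one] using
    mgf_le_exp_of_le hlam hμ hnorm hθ hsum U (x := fun _ => 1) fun _ _ => Real.one_le_exp (hθ 0)

theorem jsqMean_expWeight_le (s : ℕ × (Fin k → ℕ)) :
    jsqMean lam μ (expWeight k θ) s ≤ Real.exp (θ 0) * expWeight k θ s := by
  obtain ⟨m, y⟩ := s
  rw [jsqMean_expWeight]
  refine mul_le_mul_of_nonneg_right ?_ (Real.exp_pos _).le
  split_ifs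
  · exact gammaZero_le_exp hlam hμ hnorm hθ hsum _
  · exact gammaPlus_le_exp hlam hμ hnorm hθ hsum _

end ExpBound

theorem expWeight_mono {θ θ' : Fin (k + 1) → ℝ} {s : ℕ × (Fin k → ℕ)} (h0 : θ 0 ≤ θ' 0)
    (h : ∀ j, s.2 j ≠ 0 → θ j.succ ≤ θ' j.succ) : expWeight k θ s ≤ expWeight k θ' s := by
  refine Real.exp_le_exp.2 (add_le_add (by gcongr) (sum_le_sum fun j _ => ?_))
  rcases eq_or_ne (s.2 j) 0 with hj | hj
  · simp [hj]
  · exact mul_le_mul_of_nonneg_right (h j hj) (Nat.cast_nonneg _)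

section Faces

variable {η₀ : ℝ} {A : Finset (Fin k)}

noncomputable def thetaFace (k : ℕ) (η₀ : ℝ) (A : Finset (Fin k)) : Fin (k + 1) → ℝ :=
  Fin.cons η₀ fun j => if j ∈ A then 0 else η₀ / (k - A.card)

@[simp] theorem thetaFace_zero : thetaFace k η₀ A 0 = η₀ := rfl

@[simp] theorem thetaFace_succ (j : Fin k) :
    thetaFace k η₀ A j.succ = if j ∈ A then 0 else η₀ / (k - A.card) := by
  simp [thetaFace]

theorem thetaFace_univ : thetaFace k η₀ univ = Fin.cons η₀ fun _ => 0 := by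
  ext l
  induction l using Fin.cases <;> simp

theorem sub_card_pos (hA : A ≠ univ) : 0 < (k : ℝ) - A.card := by
  have : A.card < k := by simpa using (card_lt_iff_ne_univ A).2 hA
  exact sub_pos.2 (by exact_mod_cast this)

theorem thetaFace_nonneg (hη₀ : 0 ≤ η₀) (l : Fin (k + 1)) : 0 ≤ thetaFace k η₀ A l := by
  induction l using Fin.cases with
  | zero => exact hη₀
  | succ j =>
    rw [thetaFace_succ]
    split_ifs with hj
    · exact le_rfl
    · exact div_nonneg hη₀ (sub_card_pos (by rintro rfl; exact hj (mem_univ j))).le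

theorem sum_thetaFace_succ (hA : A ≠ univ) : ∑ j : Fin k, thetaFace k η₀ A j.succ = η₀ := by
  have hcard : (univ.filter (· ∉ A)).card = k - A.card := by
    rw [filter_notMem_eq_sdiff, ← compl_eq_univ_sdiff, card_compl, Fintype.card_fin]
  have hpos := sub_card_pos hA
  simp only [thetaFace_succ, sum_ite, sum_const_zero, sum_const, hcard, zero_add, nsmul_eq_mul]
  rw [Nat.cast_sub (by simpa using card_le_univ A)]
  field_simp

theorem thetaFace_succ_le_of_subset {B : Finset (Fin k)} (hη₀ : 0 ≤ η₀) (hAB : A ⊆ B)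
    {j : Fin k} (hj : j ∈ A ∨ j ∉ B) : thetaFace k η₀ A j.succ ≤ thetaFace k η₀ B j.succ := by
  rcases hj with hj | hj
  · simp [hj, hAB hj]
  · have hB : B ≠ univ := by rintro rfl; exact hj (mem_univ j)
    have hcard : (A.card : ℝ) ≤ B.card := by exact_mod_cast card_le_card hAB
    have hjA : j ∉ A := fun h => hj (hAB h)
    rw [thetaFace_succ, thetaFace_succ, if_neg hjA, if_neg hj]
    exact div_le_div_of_nonneg_left hη₀ (sub_card_pos hB) (by linarith)

theorem expWeight_thetaFace_le_union (hη₀ : 0 ≤ η₀) (s : ℕ × (Fin k → ℕ)) :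
    expWeight k (thetaFace k η₀ A) s ≤ expWeight k (thetaFace k η₀ (A ∪ zeroSet k s.2)) s := by
  refine expWeight_mono le_rfl fun j hj => thetaFace_succ_le_of_subset hη₀ subset_union_left ?_
  by_cases hjA : j ∈ A
  · exact Or.inl hjA
  · exact Or.inr fun h => (mem_union.1 h).elim hjA fun h => hj (mem_zeroSet.1 h)

noncomputable def faceGap (k : ℕ) (η₀ : ℝ) (μ : Fin k → ℝ) (A : Finset (Fin k)) : ℝ :=
  (1 - Real.exp (-(η₀ / (k - A.card)))) * ∑ j ∈ Aᶜ, μ j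

theorem faceGap_pos (hμ : ∀ i, 0 < μ i) (hη₀ : 0 < η₀) (hA : A ≠ univ) :
    0 < faceGap k η₀ μ A := by
  refine mul_pos (sub_pos.2 (Real.exp_lt_one_iff.2 ?_)) (sum_pos (fun j _ => hμ j) ?_)
  · exact neg_neg_of_pos (div_pos hη₀ (sub_card_pos hA))
  · by_contra h
    exact hA (compl_eq_empty_iff A |>.1 (not_nonempty_iff_eq_empty.1 h))

variable {U : Finset (Fin k)}

theorem gammaPlus_thetaFace (hUA : U ⊆ A) (hA : A ≠ univ) :
    gammaPlus k lam μ U (thetaFace k η₀ A) = gammaZero k lam μ U (thetaFace k η₀ A) := by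
  simp only [gammaPlus, gammaZero]
  congr 1
  refine sum_congr rfl fun i hi => ?_
  rw [sum_erase univ (by simp [hUA hi]), sum_thetaFace_succ hA, thetaFace_zero, neg_add_cancel,
    Real.exp_zero, mul_one]

theorem gammaZero_thetaFace_le (hlam : 0 ≤ lam) (hμ : ∀ i, 0 ≤ μ i)
    (hnorm : lam + ∑ i, μ i = 1) (hη₀ : 0 ≤ η₀) (hUA : U ⊆ A) (hA : A ≠ univ) :
    gammaZero k lam μ U (thetaFace k η₀ A) ≤ 1 - faceGap k η₀ μ A := by
  set θ := thetaFace k η₀ A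
  have hU : ∀ i ∈ U, θ i.succ = 0 := fun i hi => by simp [θ, hUA hi]
  have hUc : ∑ j ∈ Uᶜ, θ j.succ = η₀ := by
    rw [← sum_thetaFace_succ (η₀ := η₀) hA, ← sum_compl_add_sum U, sum_eq_zero hU, add_zero]
  have arrivals := arrival_mgf_le hlam U (a := θ 0 - ∑ j ∈ Uᶜ, θ j.succ) (c := 0)
    (by rw [hUc]; simp [θ]) fun i hi => (hU i hi).le
  have departures : ∑ j ∈ Uᶜ, μ j * Real.exp (-θ j.succ) + faceGap k η₀ μ A
      ≤ ∑ j ∈ Uᶜ, μ j := by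
    have hgap : faceGap k η₀ μ A = ∑ j ∈ Aᶜ, μ j * (1 - Real.exp (-θ j.succ)) := by
      rw [faceGap, mul_comm, sum_mul]
      refine sum_congr rfl fun j hj => ?_
      simp [θ, mem_compl.1 hj]
    have hsub : ∑ j ∈ Aᶜ, μ j * (1 - Real.exp (-θ j.succ))
        ≤ ∑ j ∈ Uᶜ, μ j * (1 - Real.exp (-θ j.succ)) :=
      sum_le_sum_of_subset_of_nonneg (compl_subset_compl.2 hUA) fun j _ _ =>
        mul_nonneg (hμ j) (sub_nonneg.2 (Real.exp_le_one_iff.2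
          (neg_nonpos.2 (thetaFace_nonneg hη₀ _))))
    have hsplit : ∑ j ∈ Uᶜ, μ j * Real.exp (-θ j.succ)
        + ∑ j ∈ Uᶜ, μ j * (1 - Real.exp (-θ j.succ)) = ∑ j ∈ Uᶜ, μ j := by
      rw [← sum_add_distrib]
      exact sum_congr rfl fun j _ => by ring
    linarith
  have := sum_add_sum_compl U μ
  rw [Real.exp_zero, mul_one] at arrivals
  rw [gammaZero]
  linarith

theorem jsqMean_expWeight_thetaFace_le (hlam : 0 ≤ lam) (hμ : ∀ i, 0 ≤ μ i)
    (hnorm : lam + ∑ i, μ i = 1) (hη₀ : 0 ≤ η₀) (hA : A ≠ univ) {s : ℕ × (Fin k → ℕ)}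
    (hs : zeroSet k s.2 ⊆ A) :
    jsqMean lam μ (expWeight k (thetaFace k η₀ A)) s
      ≤ (1 - faceGap k η₀ μ A) * expWeight k (thetaFace k η₀ A) s := by
  obtain ⟨m, y⟩ := s
  rw [jsqMean_expWeight, apply_ite (· * _), gammaPlus_thetaFace hs hA, ite_self]
  exact mul_le_mul_of_nonneg_right (gammaZero_thetaFace_le hlam hμ hnorm hη₀ hs hA)
    (Real.exp_pos _).le

theorem jsqMean_thetaFace_add_le (hlam : 0 ≤ lam) (hμ : ∀ i, 0 < μ i)
    (hnorm : lam + ∑ i, μ i = 1) (hη₀ : 0 < η₀) (hA : A ≠ univ) (s : ℕ × (Fin k → ℕ)) :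
    jsqMean lam μ (expWeight k (thetaFace k η₀ A)) s
        + faceGap k η₀ μ A * expWeight k (thetaFace k η₀ A) s
      ≤ expWeight k (thetaFace k η₀ A) s + (Real.exp η₀ + faceGap k η₀ μ A)
        * ∑ B ∈ univ.filter (A ⊂ ·), expWeight k (thetaFace k η₀ B) s := by
  have hμ' : ∀ i, 0 ≤ μ i := fun i => (hμ i).le
  have hgap := faceGap_pos hμ hη₀ hA
  have hw : ∀ B, 0 < expWeight k (thetaFace k η₀ B) s := fun B => Real.exp_pos _
  by_cases hs : zeroSet k s.2 ⊆ A
  · have := jsqMean_expWeight_thetaFace_le hlam hμ' hnorm hη₀.le hA hs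
    have : 0 ≤ (Real.exp η₀ + faceGap k η₀ μ A)
        * ∑ B ∈ univ.filter (A ⊂ ·), expWeight k (thetaFace k η₀ B) s :=
      mul_nonneg (by positivity) (sum_nonneg fun B _ => (hw B).le)
    linarith
  · have hcrude := jsqMean_expWeight_le hlam hμ' hnorm (thetaFace_nonneg hη₀.le (A := A))
      (sum_thetaFace_succ hA).le s
    have hunion : A ⊂ A ∪ zeroSet k s.2 :=
      ssubset_of_subset_of_ne subset_union_left fun h => hs (h ▸ subset_union_right)
    have hdom : expWeight k (thetaFace k η₀ A) s
        ≤ ∑ B ∈ univ.filter (A ⊂ ·), expWeight k (thetaFace k η₀ B) s :=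
      (expWeight_thetaFace_le_union hη₀.le s).trans
        (single_le_sum (fun B _ => (hw B).le) (mem_filter.2 ⟨mem_univ _, hunion⟩))
    rw [thetaFace_zero] at hcrude
    have := mul_le_mul_of_nonneg_left hdom (add_pos (Real.exp_pos η₀) hgap).le
    linarith [hw A]

end Faces

section Kernel

variable (hlam : 0 ≤ lam) (hμ : ∀ i, 0 ≤ μ i)
include hlam hμ

theorem jsqP_nonneg (s s' : ℕ × (Fin k → ℕ)) : 0 ≤ jsqP k lam μ s s' := by
  unfold jsqP
  refine add_nonneg (add_nonneg ?_ (sum_nonneg fun j _ => ?_)) (sum_nonneg fun i _ => ?_)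
  · split_ifs
    exacts [hlam, le_rfl, sum_nonneg fun i _ => by split_ifs <;> positivity]
  all_goals split_ifs <;> simp [hμ]

theorem tsum_ofReal_jsqP_mul {f : ℕ × (Fin k → ℕ) → ℝ} (hf : ∀ s, 0 ≤ f s)
    (s : ℕ × (Fin k → ℕ)) :
    ∑' s', ENNReal.ofReal (jsqP k lam μ s s') * ENNReal.ofReal (f s')
      = ENNReal.ofReal (jsqMean lam μ f s) := by
  simp_rw [← ENNReal.ofReal_mul (jsqP_nonneg hlam hμ _ _)]
  rw [← ENNReal.ofReal_tsum_of_nonneg (fun s' => mul_nonneg (jsqP_nonneg hlam hμ _ _) (hf s'))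
    (hasSum_jsqP_mul f s).summable, (hasSum_jsqP_mul f s).tsum_eq]

theorem jsqMean_nonneg {f : ℕ × (Fin k → ℕ) → ℝ} (hf : ∀ s, 0 ≤ f s) (s : ℕ × (Fin k → ℕ)) :
    0 ≤ jsqMean lam μ f s :=
  (hasSum_jsqP_mul f s).nonneg fun s' => mul_nonneg (jsqP_nonneg hlam hμ s s') (hf s')

variable (hnorm : lam + ∑ i, μ i = 1)
include hnorm

theorem jsqMean_one_le (s : ℕ × (Fin k → ℕ)) : jsqMean lam μ (fun _ => 1) s ≤ 1 := by
  have hone : expWeight k 0 = fun _ => 1 := by ext; simp [expWeight]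
  simpa [hone] using jsqMean_expWeight_le hlam hμ hnorm (θ := 0) (fun _ => le_rfl) (by simp) s

theorem tsum_ofReal_jsqP_le_one (s : ℕ × (Fin k → ℕ)) :
    ∑' s', ENNReal.ofReal (jsqP k lam μ s s') ≤ 1 := by
  simpa using (tsum_ofReal_jsqP_mul hlam hμ (f := fun _ => 1) (fun _ => zero_le_one) s).le.trans
    (ENNReal.ofReal_le_one.2 (jsqMean_one_le hlam hμ hnorm s))

theorem jsqP_le_one (s s' : ℕ × (Fin k → ℕ)) : jsqP k lam μ s s' ≤ 1 :=
  (le_hasSum (by simpa using hasSum_jsqP_mul (lam := lam) (μ := μ) (fun _ => 1) s) s'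
    fun t _ => jsqP_nonneg hlam hμ s t).trans (jsqMean_one_le hlam hμ hnorm s)

theorem isStationaryDist_jsqP {π : ℕ × (Fin k → ℕ) → ℝ} (hπnn : ∀ s, 0 ≤ π s)
    (hπsum : HasSum π 1) (hπstat : ∀ s', (∑' s, π s * jsqP k lam μ s s') = π s') :
    IsStationaryDist (fun s s' => ENNReal.ofReal (jsqP k lam μ s s'))
      fun s => ENNReal.ofReal (π s) := by
  intro s'
  have hnn : ∀ s, 0 ≤ π s * jsqP k lam μ s s' :=
    fun s => mul_nonneg (hπnn s) (jsqP_nonneg hlam hμ s s')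
  simp_rw [← ENNReal.ofReal_mul (hπnn _)]
  rw [← ENNReal.ofReal_tsum_of_nonneg hnn (hπsum.summable.of_nonneg_of_le hnn
    fun s => mul_le_of_le_one_right (hπnn s) (jsqP_le_one hlam hμ hnorm s s')), hπstat s']

end Kernel

theorem phi_eq_tsum {π : ℕ × (Fin k → ℕ) → ℝ} (hπnn : ∀ s, 0 ≤ π s) (θ : Fin (k + 1) → ℝ) :
    phi k π θ = ∑' s, ENNReal.ofReal (π s) * ENNReal.ofReal (expWeight k θ s) :=
  tsum_congr fun s => ENNReal.ofReal_mul (hπnn s)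

section StationaryMoments

variable {π : ℕ × (Fin k → ℕ) → ℝ} {η₀ : ℝ}
  (hlam : 0 ≤ lam) (hμ : ∀ i, 0 < μ i) (hnorm : lam + ∑ i, μ i = 1)
  (hπnn : ∀ s, 0 ≤ π s) (hπsum : HasSum π 1)
  (hπstat : ∀ s', (∑' s, π s * jsqP k lam μ s s') = π s') (hη₀ : 0 < η₀)
include hlam hμ hnorm hπnn hπsum hπstat hη₀

theorem phi_thetaFace_lt_top_of_ssuperset {A : Finset (Fin k)} (hA : A ≠ univ)
    (ih : ∀ B, A ⊂ B → phi k π (thetaFace k η₀ B) < ⊤) :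
    phi k π (thetaFace k η₀ A) < ⊤ := by
  have hμ' : ∀ i, 0 ≤ μ i := fun i => (hμ i).le
  have hgap := faceGap_pos hμ hη₀ hA
  have hC : 0 ≤ Real.exp η₀ + faceGap k η₀ μ A := by positivity
  have hw : ∀ B s, 0 ≤ expWeight k (thetaFace k η₀ B) s := fun B s => (Real.exp_pos _).le
  have hπfin : ∑' s, ENNReal.ofReal (π s) ≠ ⊤ := by
    rw [← ENNReal.ofReal_tsum_of_nonneg hπnn hπsum.summable]
    exact ENNReal.ofReal_ne_top
  have drift := (isStationaryDist_jsqP hlam hμ' hnorm hπnn hπsum hπstat).mul_tsum_le_of_drift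
    hπfin (tsum_ofReal_jsqP_le_one hlam hμ' hnorm)
    (f := fun s => ENNReal.ofReal (expWeight k (thetaFace k η₀ A) s))
    (g := fun s => ENNReal.ofReal ((Real.exp η₀ + faceGap k η₀ μ A)
      * ∑ B ∈ univ.filter (A ⊂ ·), expWeight k (thetaFace k η₀ B) s))
    (δ := ENNReal.ofReal (faceGap k η₀ μ A)) (fun s => ENNReal.ofReal_ne_top) fun s => by
      rw [tsum_ofReal_jsqP_mul hlam hμ' (hw A), ← ENNReal.ofReal_mul hgap.le,
        ← ENNReal.ofReal_add (jsqMean_nonneg hlam hμ' (hw A) s) (mul_nonneg hgap.le (hw A s)),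
        ← ENNReal.ofReal_add (hw A s) (mul_nonneg hC (sum_nonneg fun B _ => hw B s))]
      exact ENNReal.ofReal_le_ofReal (jsqMean_thetaFace_add_le hlam hμ hnorm hη₀ hA s)
  have hg : ∑' s, ENNReal.ofReal (π s) * ENNReal.ofReal ((Real.exp η₀ + faceGap k η₀ μ A)
        * ∑ B ∈ univ.filter (A ⊂ ·), expWeight k (thetaFace k η₀ B) s)
      = ENNReal.ofReal (Real.exp η₀ + faceGap k η₀ μ A)
        * ∑ B ∈ univ.filter (A ⊂ ·), phi k π (thetaFace k η₀ B) := by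
    simp_rw [phi_eq_tsum hπnn]
    rw [← Summable.tsum_finsetSum fun B _ => ENNReal.summable, ← ENNReal.tsum_mul_left]
    refine tsum_congr fun s => ?_
    rw [ENNReal.ofReal_mul hC, ENNReal.ofReal_sum_of_nonneg fun B _ => hw B s, mul_left_comm,
      mul_sum]
  rw [phi_eq_tsum hπnn]
  refine ENNReal.lt_top_of_mul_ne_top_right (ne_top_of_le_ne_top ?_ drift)
    (ENNReal.ofReal_pos.2 hgap).ne'
  rw [hg]
  exact ENNReal.mul_ne_top ENNReal.ofReal_ne_top
    (ENNReal.sum_ne_top.2 fun B hB => (ih B (mem_filter.1 hB).2).ne)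

theorem phi_thetaFace_lt_top (hfin : phi k π (Fin.cons η₀ fun _ => 0) < ⊤)
    (A : Finset (Fin k)) : phi k π (thetaFace k η₀ A) < ⊤ := by
  have hcard : ∀ B : Finset (Fin k), B.card ≤ k := fun B => by simpa using card_le_univ B
  refine strongDownwardInductionOn (p := fun A => phi k π (thetaFace k η₀ A) < ⊤) A
    (fun A ih _ => ?_) (hcard A)
  by_cases hA : A = univ
  · rw [hA, thetaFace_univ]
    exact hfin
  · exact phi_thetaFace_lt_top_of_ssuperset hlam hμ hnorm hπnn hπsum hπstat hη₀ hA
      fun B hAB => ih (hcard B) hAB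

end StationaryMoments

theorem phi_le_sum_phi_thetaFace_singleton {π : ℕ × (Fin k → ℕ) → ℝ} (hπnn : ∀ s, 0 ≤ π s)
    (hπsupp : ∀ s, π s ≠ 0 → ∃ i : Fin k, s.2 i = 0) (η₀ : ℝ) :
    phi k π (Fin.cons η₀ fun _ => η₀ / ((k : ℝ) - 1))
      ≤ ∑ i, phi k π (thetaFace k η₀ {i}) := by
  simp_rw [phi]
  rw [← Summable.tsum_finsetSum fun i _ => ENNReal.summable]
  refine ENNReal.tsum_le_tsum fun s => ?_
  rcases eq_or_ne (π s) 0 with h | h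
  · simp [h]
  obtain ⟨i, hi⟩ := hπsupp s h
  refine le_trans ?_ (single_le_sum (fun _ _ => zero_le) (mem_univ i))
  refine ENNReal.ofReal_le_ofReal (mul_le_mul_of_nonneg_left
    (expWeight_mono le_rfl fun j hj => ?_) (hπnn s))
  have hji : j ≠ i := fun h => hj (h ▸ hi)
  simp [hji]

end JSQ

open JSQ in
theorem jsq_direction_eta1_general
    (k : ℕ) (lam : ℝ) (μ : Fin k → ℝ)
    (hlam : 0 < lam) (hμ : ∀ i, 0 < μ i)
    (hnorm : lam + ∑ i, μ i = 1)
    (π : ℕ × (Fin k → ℕ) → ℝ)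
    (hπnn : ∀ s, 0 ≤ π s)
    (hπsupp : ∀ s, π s ≠ 0 → ∃ i : Fin k, s.2 i = 0)
    (hπsum : HasSum π 1)
    (hπstat : ∀ s', (∑' s, π s * jsqP k lam μ s s') = π s')
    (η₀ : ℝ) (hη₀ : 0 < η₀)
    (hfin : phi k π (Fin.cons η₀ (fun _ => 0)) < ⊤) :
    phi k π (Fin.cons η₀ (fun _ => η₀ / ((k : ℝ) - 1))) < ⊤ :=
  (phi_le_sum_phi_thetaFace_singleton hπnn hπsupp η₀).trans_lt <| ENNReal.sum_lt_top.2
    fun i _ => phi_thetaFace_lt_top hlam.le hμ hnorm hπnn hπsum hπstat hη₀ hfin {i}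

/-- **Expansion in the `η₁` direction:** if `η₀ > 0` and `φ(η₀, 0·𝟙) = E[e^{η₀ M}] < ∞`,
then `φ(η₀, (η₀/(k−1))·𝟙) < ∞`. -/
theorem jsq_direction_eta1
    (k : ℕ) (hk : 2 ≤ k) (lam : ℝ) (μ : Fin k → ℝ)
    (hlam : 0 < lam) (hμ : ∀ i, 0 < μ i)
    (hnorm : lam + ∑ i, μ i = 1)
    (hρ : rho k lam μ < 1)
    (π : ℕ × (Fin k → ℕ) → ℝ)
    (hπnn : ∀ s, 0 ≤ π s)
    (hπsupp : ∀ s, π s ≠ 0 → ∃ i : Fin k, s.2 i = 0)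
    (hπsum : HasSum π 1)
    (hπstat : ∀ s', (∑' s, π s * jsqP k lam μ s s') = π s')
    (η₀ : ℝ) (hη₀ : 0 < η₀)
    (hfin : phi k π (Fin.cons η₀ (fun _ => 0)) < ⊤) :
    phi k π (Fin.cons η₀ (fun _ => η₀ / ((k : ℝ) - 1))) < ⊤ :=
  jsq_direction_eta1_general k lam μ hlam hμ hnorm π hπnn hπsupp hπsum hπstat η₀ hη₀ hfin
end
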